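/- Let t ∈ (0,1), λ ∈ ℝ, and let U = M((θ_k),(α_k),(γ_k)). The complex vector space of sequences c ∈ ℂ^ℤ that are generalized eigenvectors of U for e^{iλ} has dimension at most 2; in particular, every eigenvalue of the unitary operator U has multiplicity at most 2. -/

import Mathlib

open Complex

noncomputable section

/-- The Hilbert space `ℓ²(ℤ)`. -/
abbrev H : Type := lp (fun _ : ℤ => ℂ) 2

/-- The canonical orthonormal basis vector `φ_k` of `ℓ²(ℤ)`. -/
def phi (k : ℤ) : H := lp.single 2 k 1

/-- `IsM t r θ α γ U` expresses that the bounded operator `U` on `ℓ²(ℤ)` acts on the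
canonical basis as the monodromy operator `M((θ_k), (α_k), (γ_k))` with transition
coefficient `t` and reflection coefficient `r`. -/
def IsM (t r : ℝ) (θ α γ : ℤ → ℝ) (U : H →L[ℂ] H) : Prop :=
  ∀ k : ℤ,
    U (phi (2 * k)) =
      (Complex.I * r * t * Complex.exp (-Complex.I * ((θ (2 * k) + θ (2 * k - 1) : ℝ) : ℂ))
        * Complex.exp (-Complex.I * ((α (2 * k) - γ (2 * k - 1) : ℝ) : ℂ))) • phi (2 * k - 1)
      + ((r : ℂ) ^ 2 * Complex.exp (-Complex.I * ((θ (2 * k) + θ (2 * k - 1) : ℝ) : ℂ))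
        * Complex.exp (-Complex.I * ((α (2 * k) - α (2 * k - 1) : ℝ) : ℂ))) • phi (2 * k)
      + (Complex.I * r * t * Complex.exp (-Complex.I * ((θ (2 * k) + θ (2 * k + 1) : ℝ) : ℂ))
        * Complex.exp (-Complex.I * ((γ (2 * k) + α (2 * k + 1) : ℝ) : ℂ))) • phi (2 * k + 1)
      - ((t : ℂ) ^ 2 * Complex.exp (-Complex.I * ((θ (2 * k) + θ (2 * k + 1) : ℝ) : ℂ))
        * Complex.exp (-Complex.I * ((γ (2 * k) + γ (2 * k + 1) : ℝ) : ℂ))) • phi (2 * k + 2)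
    ∧
    U (phi (2 * k + 1)) =
      (-((t : ℂ) ^ 2) * Complex.exp (-Complex.I * ((θ (2 * k) + θ (2 * k - 1) : ℝ) : ℂ))
        * Complex.exp (Complex.I * ((γ (2 * k) + γ (2 * k - 1) : ℝ) : ℂ))) • phi (2 * k - 1)
      + (Complex.I * t * r * Complex.exp (-Complex.I * ((θ (2 * k) + θ (2 * k - 1) : ℝ) : ℂ))
        * Complex.exp (Complex.I * ((γ (2 * k) + α (2 * k - 1) : ℝ) : ℂ))) • phi (2 * k)
      + ((r : ℂ) ^ 2 * Complex.exp (-Complex.I * ((θ (2 * k) + θ (2 * k + 1) : ℝ) : ℂ))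
        * Complex.exp (Complex.I * ((α (2 * k) - α (2 * k + 1) : ℝ) : ℂ))) • phi (2 * k + 1)
      + (Complex.I * r * t * Complex.exp (-Complex.I * ((θ (2 * k) + θ (2 * k + 1) : ℝ) : ℂ))
        * Complex.exp (Complex.I * ((α (2 * k) - γ (2 * k + 1) : ℝ) : ℂ))) • phi (2 * k + 2)

end

noncomputable section

/-- `e^{ix}` for a real phase `x`. -/
def cex (x : ℝ) : ℂ := Complex.exp (Complex.I * (x : ℂ))

/-- The matrix element `⟨φ_j, U φ_k⟩`. -/
def matEntry (U : H →L[ℂ] H) (j k : ℤ) : ℂ := inner (𝕜 := ℂ) (phi j) (U (phi k))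

/-- `c` is a generalized eigenvector of `U` for the eigenvalue `μ`:
for every `j`, `Σ_k ⟨φ_j, U φ_k⟩ c_k = μ c_j`. -/
def IsGenEigenvector (U : H →L[ℂ] H) (μ : ℂ) (c : ℤ → ℂ) : Prop :=
  ∀ j : ℤ, HasSum (fun k : ℤ => matEntry U j k * c k) (μ * c j)

end

/-! The eigenvalue equations of rows `2m+1` and `2m+2` involve only `c (2m), …, c (2m+3)`.
Written as `P (c (2m), c (2m+1)) = Q (c (2m+2), c (2m+3))`, the two `2 × 2` blocks have
determinants `μ` times an entry proportional to `t²`, since the corresponding minors of `U`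
vanish. So for `μ ≠ 0` the pair `(c (2m), c (2m+1))` vanishes iff the next one does, and a
generalized eigenvector is determined by `(c 0, c 1)`. Eigenvectors in `ℓ²` are generalized
eigenvectors, and `0` is not an eigenvalue of a unitary operator. -/

lemma phi_apply (i j : ℤ) : (phi i : ℤ → ℂ) j = if j = i then 1 else 0 := by
  simp [phi, lp.single_apply, Pi.single_apply]

lemma inner_phi (j : ℤ) (x : H) : inner ℂ (phi j) x = x j := by
  simp [phi, lp.inner_single_left]

lemma matEntry_eq (U : H →L[ℂ] H) (j k : ℤ) : matEntry U j k = (U (phi k) : ℤ → ℂ) j :=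
  inner_phi j _

lemma pair_eq_zero_iff_of_rows {R : Type*} [CommRing R] [NoZeroDivisors R]
    {μ a₀ a₁ a₂ a₃ b₀ b₁ b₂ b₃ c₀ c₁ c₂ c₃ : R} (hμ : μ ≠ 0)
    (hlow : a₀ * b₁ = a₁ * b₀) (hup : a₂ * b₃ = a₃ * b₂) (hb₀ : b₀ ≠ 0) (ha₃ : a₃ ≠ 0)
    (ha : μ * c₁ = a₀ * c₀ + a₁ * c₁ + a₂ * c₂ + a₃ * c₃)
    (hb : μ * c₂ = b₀ * c₀ + b₁ * c₁ + b₂ * c₂ + b₃ * c₃) :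
    c₀ = 0 ∧ c₁ = 0 ↔ c₂ = 0 ∧ c₃ = 0 := by
  constructor
  · rintro ⟨rfl, rfl⟩
    have h₂ : a₃ * μ * c₂ = 0 := by linear_combination a₃ * hb - b₃ * ha - c₂ * hup
    obtain rfl : c₂ = 0 := (mul_eq_zero.1 h₂).resolve_left (mul_ne_zero ha₃ hμ)
    have h₃ : a₃ * c₃ = 0 := by linear_combination -ha
    exact ⟨rfl, (mul_eq_zero.1 h₃).resolve_left ha₃⟩
  · rintro ⟨rfl, rfl⟩
    have h₁ : b₀ * μ * c₁ = 0 := by linear_combination b₀ * ha - a₀ * hb - c₁ * hlow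
    obtain rfl : c₁ = 0 := (mul_eq_zero.1 h₁).resolve_left (mul_ne_zero hb₀ hμ)
    have h₀ : b₀ * c₀ = 0 := by linear_combination -hb
    exact ⟨(mul_eq_zero.1 h₀).resolve_left hb₀, rfl⟩

namespace IsM

variable {t r : ℝ} {θ α γ : ℤ → ℝ} {U : H →L[ℂ] H}

-- `k / 2` rounds down, so columns `2n` and `2n + 1` both belong to the block `n`.
lemma matEntry_eq_zero (hU : IsM t r θ α γ U) {j k : ℤ}
    (h : j < 2 * (k / 2) - 1 ∨ 2 * (k / 2) + 2 < j) : matEntry U j k = 0 := by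
  obtain ⟨n, rfl | rfl⟩ := Int.even_or_odd' k <;>
  simp (disch := omega) only [matEntry_eq, (hU n).1, (hU n).2, lp.coeFn_add, lp.coeFn_sub,
    lp.coeFn_smul, Pi.add_apply, Pi.sub_apply, Pi.smul_apply, phi_apply, smul_eq_mul,
    if_neg, mul_zero, add_zero, sub_zero]

lemma lower_block_rank_one (hU : IsM t r θ α γ U) (ht : t ≠ 0) (m : ℤ) :
    matEntry U (2 * m + 1) (2 * m) * matEntry U (2 * m + 2) (2 * m + 1)
        = matEntry U (2 * m + 1) (2 * m + 1) * matEntry U (2 * m + 2) (2 * m) ∧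
      matEntry U (2 * m + 2) (2 * m) ≠ 0 := by
  simp (disch := omega) only [matEntry_eq, (hU m).1, (hU m).2, lp.coeFn_add, lp.coeFn_sub,
    lp.coeFn_smul, Pi.add_apply, Pi.sub_apply, Pi.smul_apply, phi_apply, smul_eq_mul,
    if_neg, ↓reduceIte, mul_zero, mul_one, add_zero, zero_add, sub_zero]
  refine ⟨?_, by simp [ht, Complex.exp_ne_zero]⟩
  push_cast
  simp only [mul_add, mul_sub, neg_mul, Complex.exp_add, Complex.exp_sub, Complex.exp_neg]
  field_simp
  linear_combination (r ^ 2 * t ^ 2 : ℂ) * Complex.I_sq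

lemma upper_block_rank_one (hU : IsM t r θ α γ U) (ht : t ≠ 0) (m : ℤ) :
    matEntry U (2 * m + 1) (2 * m + 2) * matEntry U (2 * m + 2) (2 * m + 3)
        = matEntry U (2 * m + 1) (2 * m + 3) * matEntry U (2 * m + 2) (2 * m + 2) ∧
      matEntry U (2 * m + 1) (2 * m + 3) ≠ 0 := by
  rw [show 2 * m + 3 = 2 * (m + 1) + 1 by ring, show 2 * m + 2 = 2 * (m + 1) by ring]
  simp (disch := omega) only [matEntry_eq, (hU (m + 1)).1, (hU (m + 1)).2, lp.coeFn_add,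
    lp.coeFn_sub, lp.coeFn_smul, Pi.add_apply, Pi.sub_apply, Pi.smul_apply, phi_apply,
    smul_eq_mul, if_pos, if_neg, mul_zero, mul_one, add_zero, zero_add, sub_zero]
  refine ⟨?_, by simp [ht, Complex.exp_ne_zero]⟩
  push_cast
  simp only [mul_add, mul_sub, neg_mul, Complex.exp_add, Complex.exp_sub, Complex.exp_neg]
  field_simp
  linear_combination (r ^ 2 * t ^ 2 : ℂ) * Complex.I_sq

lemma row_eq (hU : IsM t r θ α γ U) {μ : ℂ} {c : ℤ → ℂ} (hc : IsGenEigenvector U μ c)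
    {m j : ℤ} (hj : j = 2 * m + 1 ∨ j = 2 * m + 2) :
    μ * c j = matEntry U j (2 * m) * c (2 * m) + matEntry U j (2 * m + 1) * c (2 * m + 1)
      + matEntry U j (2 * m + 2) * c (2 * m + 2) + matEntry U j (2 * m + 3) * c (2 * m + 3) := by
  have hs : HasSum (fun k => matEntry U j k * c k)
      (∑ k ∈ {2 * m, 2 * m + 1, 2 * m + 2, 2 * m + 3}, matEntry U j k * c k) :=
    hasSum_sum_of_ne_finset_zero fun k hk => by
      simp only [Finset.mem_insert, Finset.mem_singleton, not_or] at hk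
      rw [hU.matEntry_eq_zero (by omega), zero_mul]
  rw [(hc j).unique hs, Finset.sum_insert (by simp), Finset.sum_insert (by simp),
    Finset.sum_insert (by simp), Finset.sum_singleton]
  ring

lemma eq_zero_of_isGenEigenvector (hU : IsM t r θ α γ U) (ht : t ≠ 0) {μ : ℂ} (hμ : μ ≠ 0)
    {c : ℤ → ℂ} (hc : IsGenEigenvector U μ c) (h₀ : c 0 = 0) (h₁ : c 1 = 0) : c = 0 := by
  have step (m : ℤ) :
      c (2 * m) = 0 ∧ c (2 * m + 1) = 0 ↔ c (2 * (m + 1)) = 0 ∧ c (2 * (m + 1) + 1) = 0 := by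
    obtain ⟨hlow, hb₀⟩ := hU.lower_block_rank_one ht m
    obtain ⟨hup, ha₃⟩ := hU.upper_block_rank_one ht m
    rw [show 2 * (m + 1) = 2 * m + 2 by ring, show 2 * m + 2 + 1 = 2 * m + 3 by ring]
    exact pair_eq_zero_iff_of_rows hμ hlow hup hb₀ ha₃ (hU.row_eq hc (Or.inl rfl))
      (hU.row_eq hc (Or.inr rfl))
  have block (m : ℤ) : c (2 * m) = 0 ∧ c (2 * m + 1) = 0 := by
    induction m using Int.induction_on with
    | zero => simpa using ⟨h₀, h₁⟩
    | succ n ih => exact (step n).1 ih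
    | pred n ih => exact (step (-n - 1)).2 (by simpa using ih)
  funext k
  obtain ⟨n, rfl | rfl⟩ := Int.even_or_odd' k
  exacts [(block n).1, (block n).2]

end IsM

def genEigenvectors (U : H →L[ℂ] H) (μ : ℂ) : Submodule ℂ (ℤ → ℂ) where
  carrier := {c | IsGenEigenvector U μ c}
  zero_mem' j := by simp
  add_mem' ha hb j := by simpa only [Pi.add_apply, mul_add] using (ha j).add (hb j)
  smul_mem' a c hc j := by
    simpa only [Pi.smul_apply, smul_eq_mul, mul_left_comm] using (hc j).mul_left a

lemma IsM.rank_genEigenvectors_le_two {t r : ℝ} {θ α γ : ℤ → ℝ} {U : H →L[ℂ] H}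
    (hU : IsM t r θ α γ U) (ht : t ≠ 0) {μ : ℂ} (hμ : μ ≠ 0) :
    Module.rank ℂ (genEigenvectors U μ) ≤ 2 := by
  let ev : genEigenvectors U μ →ₗ[ℂ] (Fin 2 → ℂ) :=
    LinearMap.pi ![LinearMap.proj 0, LinearMap.proj 1] ∘ₗ (genEigenvectors U μ).subtype
  have hev : Function.Injective ev := by
    refine (injective_iff_map_eq_zero ev).2 fun c hc => Subtype.ext ?_
    exact hU.eq_zero_of_isGenEigenvector ht hμ c.2 (congrFun hc 0) (congrFun hc 1)
  simpa using LinearMap.rank_le_of_injective ev hev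

lemma isGenEigenvector_of_apply_eq_smul {U : H →L[ℂ] H} {μ : ℂ} {x : H} (hx : U x = μ • x) :
    IsGenEigenvector U μ x := by
  intro j
  have hsum := ((lp.hasSum_single (by norm_num) x).mapL U).mapL (innerSL ℂ (phi j))
  have hterm (k : ℤ) : innerSL ℂ (phi j) (U (lp.single 2 k (x k))) = matEntry U j k * x k := by
    rw [show lp.single 2 k (x k) = x k • phi k by rw [phi, ← lp.single_smul, smul_eq_mul, mul_one],
      map_smul, map_smul, smul_eq_mul, mul_comm, innerSL_apply_apply, matEntry]
  rw [innerSL_apply_apply, hx, inner_smul_right, inner_phi] at hsum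
  simpa only [hterm] using hsum

lemma rank_eigenspace_le_rank_genEigenvectors (U : H →L[ℂ] H) (μ : ℂ) :
    Module.rank ℂ (Module.End.eigenspace (U : H →ₗ[ℂ] H) μ)
      ≤ Module.rank ℂ (genEigenvectors U μ) := by
  let f : Module.End.eigenspace (U : H →ₗ[ℂ] H) μ →ₗ[ℂ] genEigenvectors U μ :=
    { toFun x := ⟨x, isGenEigenvector_of_apply_eq_smul (Module.End.mem_eigenspace_iff.1 x.2)⟩
      map_add' _ _ := rfl
      map_smul' _ _ := rfl }
  exact LinearMap.rank_le_of_injective f fun x y h => Subtype.ext (lp.ext congr($h.1))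

lemma eigenspace_zero_eq_bot_of_mem_unitary {E : Type*} [NormedAddCommGroup E]
    [InnerProductSpace ℂ E] [CompleteSpace E] {U : E →L[ℂ] E} (hU : U ∈ unitary (E →L[ℂ] E)) :
    Module.End.eigenspace (U : E →ₗ[ℂ] E) 0 = ⊥ := by
  rw [Module.End.eigenspace_zero]
  exact LinearMap.ker_eq_bot_of_inverse (g := (star U : E →L[ℂ] E)) <|
    LinearMap.ext (ContinuousLinearMap.ext_iff.1 (Unitary.star_mul_self_of_mem hU))

theorem gen_eigenvectors_dimension_le_two_general (t : ℝ) (ht0 : 0 < t) (lam : ℝ)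
    (θ α γ : ℤ → ℝ) (U : H →L[ℂ] H)
    (hunit : U ∈ unitary (H →L[ℂ] H))
    (hU : IsM t (Real.sqrt (1 - t ^ 2)) θ α γ U) :
    (∀ c : Fin 3 → (ℤ → ℂ), (∀ i, IsGenEigenvector U (cex lam) (c i)) →
      ¬ LinearIndependent ℂ c) ∧
    (∀ μ : ℂ, Module.rank ℂ ↥(Module.End.eigenspace (U : H →ₗ[ℂ] H) μ) ≤ 2) := by
  have ht : t ≠ 0 := ht0.ne'
  refine ⟨fun c hc hli => ?_, fun μ => ?_⟩
  · let c' : Fin 3 → genEigenvectors U (cex lam) := fun i => ⟨c i, hc i⟩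
    have hli' : LinearIndependent ℂ c' := .of_comp (genEigenvectors U (cex lam)).subtype hli
    have := hli'.cardinal_le_rank.trans (hU.rank_genEigenvectors_le_two ht (Complex.exp_ne_zero _))
    norm_num at this
  · rcases eq_or_ne μ 0 with rfl | hμ
    · rw [eigenspace_zero_eq_bot_of_mem_unitary hunit]
      simp
    · exact (rank_eigenspace_le_rank_genEigenvectors U μ).trans
        (hU.rank_genEigenvectors_le_two ht hμ)

/-- The space of generalized eigenvectors of the monodromy operator for `e^{iλ}` has
dimension at most 2: any three of them are linearly dependent. In particular every
eigenvalue of `U` has multiplicity at most 2. -/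
theorem gen_eigenvectors_dimension_le_two (t : ℝ) (ht0 : 0 < t) (ht1 : t < 1) (lam : ℝ)
    (θ α γ : ℤ → ℝ) (U : H →L[ℂ] H)
    (hunit : U ∈ unitary (H →L[ℂ] H))
    (hU : IsM t (Real.sqrt (1 - t ^ 2)) θ α γ U) :
    (∀ c : Fin 3 → (ℤ → ℂ), (∀ i, IsGenEigenvector U (cex lam) (c i)) →
      ¬ LinearIndependent ℂ c) ∧
    (∀ μ : ℂ, Module.rank ℂ ↥(Module.End.eigenspace (U : H →ₗ[ℂ] H) μ) ≤ 2) :=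
  gen_eigenvectors_dimension_le_two_general t ht0 lam θ α γ U hunit hU
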